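/- arXiv:0906.0874 — 4 statements merged into one kernel-verified Lean document; each statement's English description precedes it below -/
import Mathlib

section
/- Let φ be a c-convex function on S^n, differentiable at x and y. Then the gradient map G_φ satisfies the 2-monotonicity inequality d(x, G_φ(x))² + d(y, G_φ(y))² ≤ d(x, G_φ(y))² + d(y, G_φ(x))², with equality only if G_φ(x) = G_φ(y). -/
/-!
For c-convex `φ` the supremum in `φ = (φᶜ)ᶜ` is attained: `φᶜ` is lower semicontinuous and the
sphere is compact. So `φ x + φᶜ y = -c(x, y)` for some `y`, and then `x` minimizes `φ + c(·, y)`.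
Differentiating along great circles through `x` gives `∇φ(x) = exp_x⁻¹(y)`, i.e. `y = G_φ(x)`;
the antipode `y = -x` cannot occur, since `c(·, -x)` has a concave kink at `x`. Adding the
equalities `φ x + φᶜ(G_φ x) = -c(x, G_φ x)` and `φ y + φᶜ(G_φ y) = -c(y, G_φ y)` to the
inequalities `φ y + φᶜ(G_φ x) ≥ -c(y, G_φ x)` and `φ x + φᶜ(G_φ y) ≥ -c(x, G_φ y)` gives the
claim; in the equality case `y` minimizes `φ + c(·, G_φ x)`, whence `G_φ x = G_φ y`.
On `S⁰` the Riemannian gradient vanishes and `G_φ` is the identity.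
-/

open Real Set

noncomputable section

/-- Ambient Euclidean space `ℝ^{n+1}`. -/
abbrev Amb (n : ℕ) := EuclideanSpace ℝ (Fin (n + 1))

/-- The unit sphere `S^n ⊂ ℝ^{n+1}`. -/
def Sph (n : ℕ) : Set (Amb n) := Metric.sphere (0 : Amb n) 1

/-- Geodesic distance on the sphere. -/
noncomputable def sphDist {n : ℕ} (x y : Amb n) : ℝ := Real.arccos (inner ℝ x y : ℝ)

/-- The cost function `c(x,y) = d(x,y)²/2`. -/
noncomputable def cost {n : ℕ} (x y : Amb n) : ℝ := sphDist x y ^ 2 / 2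

/-- The c-transform `φ^c(y) = sup_{x ∈ Sⁿ} {-c(x,y) - φ(x)}`. -/
noncomputable def cT {n : ℕ} (φ : Amb n → ℝ) (y : Amb n) : ℝ :=
  ⨆ x : (Sph n), (-(cost (x : Amb n) y) - φ x)

/-- A function is c-convex if `(φ^c)^c = φ` on the sphere. -/
def CConvex {n : ℕ} (φ : Amb n → ℝ) : Prop := ∀ x ∈ Sph n, cT (cT φ) x = φ x

/-- Exponential map of the sphere at `x` applied to a tangent vector `v`. -/
noncomputable def sphExp {n : ℕ} (x v : Amb n) : Amb n :=
  Real.cos ‖v‖ • x + (Real.sin ‖v‖ / ‖v‖) • v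

/-- Inverse exponential map `exp_x⁻¹(y)`. -/
noncomputable def sphLog {n : ℕ} (x y : Amb n) : Amb n :=
  (sphDist x y / Real.sin (sphDist x y)) • (y - Real.cos (sphDist x y) • x)

/-- Riemannian gradient on the sphere: tangential projection of the ambient gradient. -/
noncomputable def sphGrad {n : ℕ} (φ : Amb n → ℝ) (x : Amb n) : Amb n :=
  gradient φ x - (inner ℝ x (gradient φ x) : ℝ) • x

/-- The gradient map `G_φ(x) = exp_x(∇φ(x))`. -/
noncomputable def gradMap {n : ℕ} (φ : Amb n → ℝ) (x : Amb n) : Amb n :=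
  sphExp x (sphGrad φ x)

open Filter Module
open scoped RealInnerProductSpace

section InnerProductSpace

variable {E : Type*} [NormedAddCommGroup E] [InnerProductSpace ℝ E]

theorem eq_zero_of_inner_unit_tangent_eq_zero {x w : E} (hxw : ⟪x, w⟫ = 0)
    (h : ∀ v : E, ‖v‖ = 1 → ⟪x, v⟫ = 0 → ⟪w, v⟫ = 0) : w = 0 := by
  by_contra hw
  have hunit := h (‖w‖⁻¹ • w) (norm_smul_inv_norm hw) (by rw [real_inner_smul_right, hxw, mul_zero])
  rw [real_inner_smul_right, real_inner_self_eq_norm_sq] at hunit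
  have hnorm : ‖w‖ ≠ 0 := norm_ne_zero_iff.mpr hw
  field_simp at hunit
  exact hnorm hunit

theorem exists_norm_eq_one_inner_eq_zero [FiniteDimensional ℝ E] (h : 1 < finrank ℝ E) (x : E) :
    ∃ v : E, ‖v‖ = 1 ∧ ⟪x, v⟫ = 0 := by
  have hne : (ℝ ∙ x)ᗮ ≠ ⊥ := by
    intro hbot
    have hsum := Submodule.finrank_add_finrank_orthogonal (ℝ ∙ x)
    have hspan : finrank ℝ (ℝ ∙ x) ≤ 1 := by
      simpa using finrank_span_le_card ({x} : Set E)
    rw [hbot, finrank_bot] at hsum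
    omega
  obtain ⟨w, hw, hw0⟩ := Submodule.exists_mem_ne_zero_of_ne_bot hne
  refine ⟨‖w‖⁻¹ • w, norm_smul_inv_norm hw0, ?_⟩
  rw [real_inner_smul_right, Submodule.mem_orthogonal_singleton_iff_inner_right.mp hw, mul_zero]

theorem eq_zero_of_inner_eq_zero_of_finrank_eq_one (h : finrank ℝ E = 1) {x w : E} (hx : x ≠ 0)
    (hxw : ⟪x, w⟫ = 0) : w = 0 := by
  obtain ⟨c, rfl⟩ := (finrank_eq_one_iff_of_nonzero' x hx).mp h w
  rw [real_inner_smul_right, real_inner_self_eq_norm_sq] at hxw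
  simp_all

end InnerProductSpace

theorem le_of_hasDerivAt_of_forall_le {f : ℝ → ℝ} {f' c ε : ℝ} (hf : HasDerivAt f f' 0)
    (hε : 0 < ε) (h : ∀ t ∈ Icc 0 ε, f 0 + c * t - t ^ 2 / 2 ≤ f t) : c ≤ f' := by
  have hg : HasDerivAt (fun t => f t - c * t + t ^ 2 / 2) (f' - c) 0 := by
    have hlin : HasDerivAt (fun t => c * t) c 0 := by simpa using (hasDerivAt_id 0).const_mul c
    have hsq : HasDerivAt (fun t : ℝ => t ^ 2 / 2) 0 0 := by
      simpa using (hasDerivAt_pow 2 (0 : ℝ)).div_const 2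
    exact ((hf.sub hlin).add hsq).congr_deriv (add_zero _)
  have hmin : IsMinOn (fun t => f t - c * t + t ^ 2 / 2) (Icc 0 ε) 0 :=
    isMinOn_iff.mpr fun t ht => by linarith [h t ht]
  have hcone : ε - 0 ∈ posTangentConeAt (Icc 0 ε) 0 :=
    sub_mem_posTangentConeAt_of_segment_subset (segment_eq_Icc hε.le ▸ Subset.rfl)
  have := hmin.localize.hasFDerivWithinAt_nonneg hg.hasDerivWithinAt.hasFDerivWithinAt hcone
  rw [ContinuousLinearMap.toSpanSingleton_apply, smul_eq_mul, sub_zero] at this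
  nlinarith

section Sphere

variable {n : ℕ} {x y : Amb n}

theorem mem_Sph_iff : x ∈ Sph n ↔ ‖x‖ = 1 := by
  simp [Sph]

theorem inner_self_of_mem_Sph (hx : x ∈ Sph n) : ⟪x, x⟫ = 1 := by
  rw [real_inner_self_eq_norm_sq, mem_Sph_iff.mp hx, one_pow]

theorem isCompact_Sph : IsCompact (Sph n) :=
  isCompact_sphere _ _

theorem Sph_nonempty : (Sph n).Nonempty :=
  ⟨EuclideanSpace.single 0 1, by simp [mem_Sph_iff]⟩

theorem abs_inner_le_one_of_mem_Sph (hx : x ∈ Sph n) (hy : y ∈ Sph n) : |⟪x, y⟫| ≤ 1 := by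
  simpa [mem_Sph_iff.mp hx, mem_Sph_iff.mp hy] using abs_real_inner_le_norm x y

theorem cos_sphDist (hx : x ∈ Sph n) (hy : y ∈ Sph n) : cos (sphDist x y) = ⟪x, y⟫ :=
  let h := abs_le.mp (abs_inner_le_one_of_mem_Sph hx hy)
  cos_arccos h.1 h.2

theorem sphDist_nonneg (x y : Amb n) : 0 ≤ sphDist x y :=
  arccos_nonneg _

theorem sphDist_le_pi (x y : Amb n) : sphDist x y ≤ π :=
  arccos_le_pi _

theorem sphDist_comm (x y : Amb n) : sphDist x y = sphDist y x := by
  rw [sphDist, sphDist, real_inner_comm]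

theorem sphDist_self (hx : x ∈ Sph n) : sphDist x x = 0 := by
  rw [sphDist, inner_self_of_mem_Sph hx, arccos_one]

theorem sphDist_eq_zero_iff (hx : x ∈ Sph n) (hy : y ∈ Sph n) : sphDist x y = 0 ↔ x = y := by
  rw [sphDist, arccos_eq_zero, ← inner_eq_one_iff_of_norm_eq_one (𝕜 := ℝ) (mem_Sph_iff.mp hx)
    (mem_Sph_iff.mp hy)]
  exact ⟨fun h => le_antisymm (abs_le.mp (abs_inner_le_one_of_mem_Sph hx hy)).2 h, ge_of_eq⟩

theorem sq_sphDist (x y : Amb n) : sphDist x y ^ 2 = 2 * cost x y := by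
  rw [cost]; ring

theorem cost_nonneg (x y : Amb n) : 0 ≤ cost x y := by
  rw [cost]; positivity

theorem cost_le (x y : Amb n) : cost x y ≤ π ^ 2 / 2 := by
  have := sphDist_nonneg x y
  have := sphDist_le_pi x y
  rw [cost]; gcongr

theorem cost_comm (x y : Amb n) : cost x y = cost y x := by
  rw [cost, cost, sphDist_comm]

theorem cost_self (hx : x ∈ Sph n) : cost x x = 0 := by
  rw [cost, sphDist_self hx]; norm_num

theorem continuous_cost_left (y : Amb n) : Continuous fun x => cost x y := by
  unfold cost sphDist; fun_prop

theorem continuous_cost_right (x : Amb n) : Continuous fun y => cost x y := by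
  unfold cost sphDist; fun_prop

end Sphere

section CTransform

variable {n : ℕ} {φ : Amb n → ℝ} {m : ℝ} {x y : Amb n}

theorem bddAbove_range_neg_cost_sub (hm : ∀ z ∈ Sph n, m ≤ φ z) (y : Amb n) :
    BddAbove (range fun z : Sph n => -cost (z : Amb n) y - φ z) :=
  ⟨-m, by rintro _ ⟨z, rfl⟩; linarith [cost_nonneg (z : Amb n) y, hm z z.2]⟩

theorem neg_cost_sub_le_cT (hm : ∀ z ∈ Sph n, m ≤ φ z) {z : Amb n} (hz : z ∈ Sph n)
    (y : Amb n) : -cost z y - φ z ≤ cT φ y :=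
  le_ciSup (bddAbove_range_neg_cost_sub hm y) ⟨z, hz⟩

theorem CConvex.exists_forall_le (hφ : CConvex φ) : ∃ m, ∀ z ∈ Sph n, m ≤ φ z := by
  by_contra! h
  -- otherwise each supremum defining `cT φ` is unbounded, so takes the junk value `0`
  have hcT : ∀ y, cT φ y = 0 := fun y => Real.iSup_of_not_bddAbove fun ⟨M, hM⟩ => by
    obtain ⟨z, hz, hzφ⟩ := h (-M - π ^ 2 / 2)
    linarith [hM ⟨⟨z, hz⟩, rfl⟩, cost_le z y]
  obtain ⟨z, hz, hzφ⟩ := h 0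
  have := neg_cost_sub_le_cT (φ := cT φ) (m := 0) (fun w _ => (hcT w).ge) hz z
  rw [hφ z hz, cost_self hz, hcT] at this
  linarith

theorem lowerSemicontinuous_cT (hm : ∀ z ∈ Sph n, m ≤ φ z) : LowerSemicontinuous (cT φ) :=
  lowerSemicontinuous_ciSup (bddAbove_range_neg_cost_sub hm) fun _ =>
    ((continuous_cost_right _).neg.sub continuous_const).lowerSemicontinuous

theorem exists_isMinOn_cost_add_cT (hm : ∀ z ∈ Sph n, m ≤ φ z) (x : Amb n) :
    ∃ y ∈ Sph n, IsMinOn (fun y => cost y x + cT φ y) (Sph n) y := by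
  have hlsc : LowerSemicontinuous fun y => cost y x + cT φ y :=
    (continuous_cost_left x).lowerSemicontinuous.add (lowerSemicontinuous_cT hm)
  exact (hlsc.lowerSemicontinuousOn _).exists_isMinOn Sph_nonempty isCompact_Sph

theorem CConvex.exists_cT_eq (hφ : CConvex φ) (hm : ∀ z ∈ Sph n, m ≤ φ z) (hx : x ∈ Sph n) :
    ∃ y ∈ Sph n, cT φ y = -cost x y - φ x := by
  obtain ⟨y, hy, hmin⟩ := exists_isMinOn_cost_add_cT hm x
  have := (Sph_nonempty (n := n)).to_subtype
  have hle : φ x ≤ -cost y x - cT φ y := by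
    rw [← hφ x hx]
    exact ciSup_le fun w => by linarith [isMinOn_iff.mp hmin w w.2]
  refine ⟨y, hy, le_antisymm ?_ ?_⟩
  · linarith [cost_comm x y]
  · linarith [neg_cost_sub_le_cT hm hx y]

theorem isMinOn_add_cost_of_cT_eq (hm : ∀ z ∈ Sph n, m ≤ φ z)
    (h : cT φ y = -cost x y - φ x) : IsMinOn (fun z => φ z + cost z y) (Sph n) x :=
  isMinOn_iff.mpr fun z hz => by linarith [neg_cost_sub_le_cT hm hz y]

end CTransform

section GreatCircle

variable {n : ℕ} {x v y : Amb n}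

def greatCircle (x v : Amb n) (t : ℝ) : Amb n :=
  cos t • x + sin t • v

@[simp]
theorem greatCircle_zero : greatCircle x v 0 = x := by
  simp [greatCircle]

theorem inner_greatCircle (t : ℝ) (y : Amb n) :
    ⟪greatCircle x v t, y⟫ = cos t * ⟪x, y⟫ + sin t * ⟪v, y⟫ := by
  simp only [greatCircle, inner_add_left, real_inner_smul_left]

theorem greatCircle_mem (hx : x ∈ Sph n) (hv : ‖v‖ = 1) (hxv : ⟪x, v⟫ = 0) (t : ℝ) :
    greatCircle x v t ∈ Sph n := by
  have hsq : ‖greatCircle x v t‖ ^ 2 = 1 := by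
    rw [← real_inner_self_eq_norm_sq, inner_greatCircle, greatCircle, inner_add_right,
      inner_add_right, real_inner_smul_right, real_inner_smul_right, real_inner_smul_right,
      real_inner_smul_right, inner_self_of_mem_Sph hx, real_inner_self_eq_norm_sq, hv,
      real_inner_comm x v, hxv]
    linear_combination sin_sq_add_cos_sq t
  exact mem_Sph_iff.mpr ((pow_eq_one_iff_of_nonneg (norm_nonneg _) two_ne_zero).mp hsq)

theorem hasDerivAt_greatCircle : HasDerivAt (greatCircle x v) v 0 :=
  (((hasDerivAt_cos 0).smul_const x).add ((hasDerivAt_sin 0).smul_const v)).congr_deriv (by simp)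

theorem sphDist_neg_right (x y : Amb n) : sphDist x (-y) = π - sphDist x y := by
  rw [sphDist, sphDist, inner_neg_right, arccos_neg]

theorem sphDist_greatCircle_self (hx : x ∈ Sph n) (hxv : ⟪x, v⟫ = 0) {t : ℝ} (ht : |t| ≤ π) :
    sphDist (greatCircle x v t) x = |t| := by
  rw [sphDist, inner_greatCircle, inner_self_of_mem_Sph hx, real_inner_comm, hxv, mul_one,
    mul_zero, add_zero, ← cos_abs, arccos_cos (abs_nonneg t) ht]

end GreatCircle

section FirstVariation

variable {n : ℕ} {φ : Amb n → ℝ} {x v y : Amb n}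

theorem inner_sphGrad (hx : x ∈ Sph n) : ⟪x, sphGrad φ x⟫ = 0 := by
  rw [sphGrad, inner_sub_right, real_inner_smul_right, inner_self_of_mem_Sph hx, mul_one, sub_self]

theorem hasDerivAt_comp_greatCircle (hdx : DifferentiableAt ℝ φ x) (hxv : ⟪x, v⟫ = 0) :
    HasDerivAt (fun t => φ (greatCircle x v t)) ⟪sphGrad φ x, v⟫ 0 := by
  have hφ : HasFDerivAt φ (fderiv ℝ φ x) (greatCircle x v 0) := by
    rw [greatCircle_zero]; exact hdx.hasFDerivAt
  refine (hφ.comp_hasDerivAt 0 hasDerivAt_greatCircle).congr_deriv ?_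
  rw [sphGrad, inner_sub_left, real_inner_smul_left, hxv, mul_zero, sub_zero, inner_gradient_left]

theorem inner_sphLog_self (hx : x ∈ Sph n) (hy : y ∈ Sph n) : ⟪x, sphLog x y⟫ = 0 := by
  rw [sphLog, real_inner_smul_right, inner_sub_right, real_inner_smul_right,
    inner_self_of_mem_Sph hx, cos_sphDist hx hy, mul_one, sub_self, mul_zero]

theorem inner_sphLog_of_inner_eq_zero (hxv : ⟪x, v⟫ = 0) :
    ⟪sphLog x y, v⟫ = sphDist x y / sin (sphDist x y) * ⟪y, v⟫ := by
  rw [sphLog, real_inner_smul_left, inner_sub_left, real_inner_smul_left, hxv, mul_zero, sub_zero]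

theorem sphLog_self (hx : x ∈ Sph n) : sphLog x x = 0 := by
  rw [sphLog, sphDist_self hx, zero_div, zero_smul]

theorem abs_inner_lt_one_of_ne (hx : x ∈ Sph n) (hy : y ∈ Sph n) (hyx : y ≠ x) (hxy : y ≠ -x) :
    |⟪x, y⟫| < 1 := by
  have hle := abs_le.mp (abs_inner_le_one_of_mem_Sph hx hy)
  refine abs_lt.mpr ⟨lt_of_le_of_ne hle.1 fun h => hxy ?_, lt_of_le_of_ne hle.2 fun h => hyx ?_⟩
  · rw [(inner_eq_neg_one_iff_of_norm_eq_one (mem_Sph_iff.mp hx) (mem_Sph_iff.mp hy)).mp h.symm,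
      neg_neg]
  · exact ((inner_eq_one_iff_of_norm_eq_one (mem_Sph_iff.mp hx) (mem_Sph_iff.mp hy)).mp h).symm

theorem sphExp_sphLog (hx : x ∈ Sph n) (hy : y ∈ Sph n) (hxy : y ≠ -x) :
    sphExp x (sphLog x y) = y := by
  rcases eq_or_ne y x with rfl | hne
  · simp [sphLog_self hy, sphExp]
  set θ := sphDist x y
  have ha := abs_lt.mp (abs_inner_lt_one_of_ne hx hy hne hxy)
  have hθ : 0 < θ := arccos_pos.mpr ha.2
  have hθπ : θ < π := arccos_lt_pi.mpr ha.1
  have hsin : 0 < sin θ := sin_pos_of_pos_of_lt_pi hθ hθπ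
  have hnorm : ‖y - cos θ • x‖ = sin θ := by
    refine (pow_left_inj₀ (norm_nonneg _) hsin.le two_ne_zero).mp ?_
    rw [norm_sub_sq_real, real_inner_smul_right, norm_smul, mem_Sph_iff.mp hx,
      mem_Sph_iff.mp hy, real_inner_comm, ← cos_sphDist hx hy, Real.norm_eq_abs, mul_one, sq_abs]
    linear_combination -sin_sq_add_cos_sq θ
  have hlog : ‖sphLog x y‖ = θ := by
    rw [sphLog, norm_smul, hnorm, Real.norm_eq_abs, abs_of_pos (div_pos hθ hsin),
      div_mul_cancel₀ _ hsin.ne']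
  have hscalar : sin θ / θ * (θ / sin θ) = 1 := by field_simp
  rw [sphExp, hlog, sphLog, smul_smul, hscalar, one_smul, add_sub_cancel]

theorem hasDerivAt_cost_greatCircle (hx : x ∈ Sph n) (hy : y ∈ Sph n) (hxv : ⟪x, v⟫ = 0)
    (hxy : y ≠ -x) : HasDerivAt (fun t => cost (greatCircle x v t) y) (-⟪sphLog x y, v⟫) 0 := by
  rcases eq_or_ne y x with rfl | hne
  · rw [sphLog_self hy, inner_zero_left, neg_zero]
    have hsq : HasDerivAt (fun t : ℝ => t ^ 2 / 2) 0 0 := by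
      simpa using (hasDerivAt_pow 2 (0 : ℝ)).div_const 2
    refine hsq.congr_of_eventuallyEq ?_
    filter_upwards [Icc_mem_nhds (neg_lt_zero.mpr pi_pos) pi_pos] with t ht
    rw [cost, sphDist_greatCircle_self hy hxv (abs_le.mpr ht), sq_abs]
  have ha := abs_lt.mp (abs_inner_lt_one_of_ne hx hy hne hxy)
  have hinner : HasDerivAt (fun t => ⟪greatCircle x v t, y⟫) ⟪v, y⟫ 0 := by
    simpa using hasDerivAt_greatCircle.inner ℝ (hasDerivAt_const 0 y)
  have hcost := (((hasDerivAt_arccos ha.1.ne' ha.2.ne).comp_of_eq 0 hinner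
    (by rw [greatCircle_zero])).pow 2).div_const 2
  refine hcost.congr_deriv ?_
  rw [inner_sphLog_of_inner_eq_zero hxv, sphDist, sin_arccos, real_inner_comm v y]
  simp only [Function.comp_apply, greatCircle_zero]
  ring

end FirstVariation

section Minimizer

variable {n : ℕ} {φ : Amb n → ℝ} {m : ℝ} {x y : Amb n}

theorem sphGrad_eq_sphLog_of_isMinOn (hx : x ∈ Sph n) (hy : y ∈ Sph n) (hxy : y ≠ -x)
    (hdx : DifferentiableAt ℝ φ x) (hmin : IsMinOn (fun z => φ z + cost z y) (Sph n) x) :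
    sphGrad φ x = sphLog x y := by
  refine sub_eq_zero.mp (eq_zero_of_inner_unit_tangent_eq_zero (x := x) ?_ fun v hv hxv => ?_)
  · rw [inner_sub_right, inner_sphGrad hx, inner_sphLog_self hx hy, sub_zero]
  · have hloc : IsLocalMin (fun t => φ (greatCircle x v t) + cost (greatCircle x v t) y) 0 :=
      Eventually.of_forall fun t => by
        simpa using isMinOn_iff.mp hmin _ (greatCircle_mem hx hv hxv t)
    have := hloc.hasDerivAt_eq_zero
      ((hasDerivAt_comp_greatCircle hdx hxv).add (hasDerivAt_cost_greatCircle hx hy hxv hxy))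
    rw [inner_sub_left]
    linarith

theorem pi_le_inner_sphGrad_of_isMinOn (hx : x ∈ Sph n) {v : Amb n} (hv : ‖v‖ = 1)
    (hxv : ⟪x, v⟫ = 0) (hdx : DifferentiableAt ℝ φ x)
    (hmin : IsMinOn (fun z => φ z + cost z (-x)) (Sph n) x) : π ≤ ⟪sphGrad φ x, v⟫ := by
  refine le_of_hasDerivAt_of_forall_le (hasDerivAt_comp_greatCircle hdx hxv) pi_pos
    fun t ht => ?_
  have h := isMinOn_iff.mp hmin _ (greatCircle_mem hx hv hxv t)
  rw [cost, cost, sphDist_neg_right, sphDist_neg_right, sphDist_self hx,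
    sphDist_greatCircle_self hx hxv (abs_le.mpr ⟨by linarith [ht.1, pi_pos], ht.2⟩),
    abs_of_nonneg ht.1] at h
  simp only [greatCircle_zero]
  nlinarith

/-- The cost to the antipode has a concave kink `-π |t|` at `x` in every tangent direction,
which a differentiable `φ` cannot compensate. -/
theorem ne_neg_of_isMinOn (hn : 0 < n) (hx : x ∈ Sph n) (hdx : DifferentiableAt ℝ φ x)
    (hmin : IsMinOn (fun z => φ z + cost z y) (Sph n) x) : y ≠ -x := by
  rintro rfl
  obtain ⟨v, hv, hxv⟩ := exists_norm_eq_one_inner_eq_zero (by simp; omega) x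
  have h₁ := pi_le_inner_sphGrad_of_isMinOn hx hv hxv hdx hmin
  have h₂ := pi_le_inner_sphGrad_of_isMinOn hx (by rwa [norm_neg])
    (by rw [inner_neg_right, hxv, neg_zero]) hdx hmin
  rw [inner_neg_right] at h₂
  linarith [pi_pos]

theorem eq_gradMap_of_isMinOn (hn : 0 < n) (hx : x ∈ Sph n) (hy : y ∈ Sph n)
    (hdx : DifferentiableAt ℝ φ x) (hmin : IsMinOn (fun z => φ z + cost z y) (Sph n) x) :
    y = gradMap φ x := by
  have hxy := ne_neg_of_isMinOn hn hx hdx hmin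
  rw [gradMap, sphGrad_eq_sphLog_of_isMinOn hx hy hxy hdx hmin, sphExp_sphLog hx hy hxy]

theorem eq_gradMap_of_cT_eq (hn : 0 < n) (hm : ∀ z ∈ Sph n, m ≤ φ z) (hx : x ∈ Sph n)
    (hy : y ∈ Sph n) (hdx : DifferentiableAt ℝ φ x) (h : cT φ y = -cost x y - φ x) :
    y = gradMap φ x :=
  eq_gradMap_of_isMinOn hn hx hy hdx (isMinOn_add_cost_of_cT_eq hm h)

theorem CConvex.gradMap_mem_and_cT_eq (hn : 0 < n) (hφ : CConvex φ)
    (hm : ∀ z ∈ Sph n, m ≤ φ z) (hx : x ∈ Sph n) (hdx : DifferentiableAt ℝ φ x) :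
    gradMap φ x ∈ Sph n ∧ cT φ (gradMap φ x) = -cost x (gradMap φ x) - φ x := by
  obtain ⟨y, hy, h⟩ := hφ.exists_cT_eq hm hx
  obtain rfl := eq_gradMap_of_cT_eq hn hm hx hy hdx h
  exact ⟨hy, h⟩

end Minimizer

theorem gradMap_eq_self_of_dim_zero (φ : Amb 0 → ℝ) {x : Amb 0} (hx : x ∈ Sph 0) :
    gradMap φ x = x := by
  have hx0 : x ≠ 0 := ne_zero_of_norm_ne_zero (by rw [mem_Sph_iff.mp hx]; exact one_ne_zero)
  have hgrad : sphGrad φ x = 0 :=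
    eq_zero_of_inner_eq_zero_of_finrank_eq_one (by simp) hx0 (inner_sphGrad hx)
  simp [gradMap, sphExp, hgrad]

/-- 2-monotonicity of the gradient map of a c-convex function, with
equality only when the two image points coincide. -/
theorem gradMap_two_monotone {n : ℕ} (φ : Amb n → ℝ) (hφ : CConvex φ)
    (x y : Amb n) (hx : x ∈ Sph n) (hy : y ∈ Sph n)
    (hdx : DifferentiableAt ℝ φ x) (hdy : DifferentiableAt ℝ φ y) :
    sphDist x (gradMap φ x) ^ 2 + sphDist y (gradMap φ y) ^ 2 ≤
      sphDist x (gradMap φ y) ^ 2 + sphDist y (gradMap φ x) ^ 2 ∧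
    (sphDist x (gradMap φ x) ^ 2 + sphDist y (gradMap φ y) ^ 2 =
      sphDist x (gradMap φ y) ^ 2 + sphDist y (gradMap φ x) ^ 2 →
      gradMap φ x = gradMap φ y) := by
  rcases Nat.eq_zero_or_pos n with rfl | hn
  · rw [gradMap_eq_self_of_dim_zero φ hx, gradMap_eq_self_of_dim_zero φ hy, sphDist_self hx,
      sphDist_self hy, sphDist_comm y x]
    refine ⟨by nlinarith [sq_nonneg (sphDist x y)], fun h => (sphDist_eq_zero_iff hx hy).mp ?_⟩
    nlinarith [sphDist_nonneg x y]
  obtain ⟨m, hm⟩ := hφ.exists_forall_le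
  obtain ⟨hGx, hx_eq⟩ := hφ.gradMap_mem_and_cT_eq hn hm hx hdx
  obtain ⟨-, hy_eq⟩ := hφ.gradMap_mem_and_cT_eq hn hm hy hdy
  have hyx_le := neg_cost_sub_le_cT hm hy (gradMap φ x)
  have hxy_le := neg_cost_sub_le_cT hm hx (gradMap φ y)
  simp only [sq_sphDist]
  exact ⟨by linarith, fun h => eq_gradMap_of_cT_eq hn hm hy hGx hdy (by linarith)⟩
end
end

section
/- Let A and B be symmetric positive semidefinite n×n real matrices. Then the function t ↦ det((1-t)A + tB)^{1/n} is concave on [0,1]; i.e., det((1-t)A + tB)^{1/n} ≥ (1-t)det(A)^{1/n} + t det(B)^{1/n}. -/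
/-!
Minkowski's determinant inequality `det A ^ (1/n) + det B ^ (1/n) ≤ det (A + B) ^ (1/n)` gives the
concavity, since `det ^ (1/n)` is positively homogeneous of degree one. When `A = Sᴴ S` is
positive definite, `A + B = Sᴴ (1 + M) S` with `M = S⁻ᴴ B S⁻¹` positive semidefinite, and after
dividing by `det A ^ (1/n)` the inequality reads `1 + (∏ μᵢ) ^ (1/n) ≤ (∏ (1 + μᵢ)) ^ (1/n)` in
the eigenvalues `μᵢ ≥ 0` of `M`: this is AM-GM for the numbers `1 / (1 + μᵢ)` and
`μᵢ / (1 + μᵢ)`, whose arithmetic means add up to `1`. If `A` and `B` are both singular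
there is nothing to prove.
-/

open Finset in
theorem Real.one_add_geom_mean_le_geom_mean_one_add_weighted {ι : Type*} (s : Finset ι)
    (w z : ι → ℝ) (hw : ∀ i ∈ s, 0 ≤ w i) (hw' : ∑ i ∈ s, w i = 1) (hz : ∀ i ∈ s, 0 ≤ z i) :
    1 + ∏ i ∈ s, z i ^ w i ≤ ∏ i ∈ s, (1 + z i) ^ w i := by
  have hpos : ∀ i ∈ s, 0 < 1 + z i := fun i hi => by linarith [hz i hi]
  have amgm_one := geom_mean_le_arith_mean_weighted s w (fun i => 1 / (1 + z i)) hw hw'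
    fun i hi => (one_div_pos.mpr (hpos i hi)).le
  have amgm_z := geom_mean_le_arith_mean_weighted s w (fun i => z i / (1 + z i)) hw hw'
    fun i hi => div_nonneg (hz i hi) (hpos i hi).le
  rw [prod_congr rfl fun i hi => div_rpow zero_le_one (hpos i hi).le (w i), prod_div_distrib]
    at amgm_one
  rw [prod_congr rfl fun i hi => div_rpow (hz i hi) (hpos i hi).le (w i), prod_div_distrib]
    at amgm_z
  simp only [one_rpow, prod_const_one] at amgm_one
  rw [← div_le_one (prod_pos fun i hi => rpow_pos_of_pos (hpos i hi) _), add_div]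
  calc _ ≤ ∑ i ∈ s, w i * (1 / (1 + z i)) + ∑ i ∈ s, w i * (z i / (1 + z i)) :=
        add_le_add amgm_one amgm_z
    _ = ∑ i ∈ s, w i := by
        rw [← sum_add_distrib]
        refine sum_congr rfl fun i hi => ?_
        rw [← mul_add, ← add_div, div_self (hpos i hi).ne', mul_one]
    _ = 1 := hw'

namespace Matrix

variable {ι : Type*} [Fintype ι] [DecidableEq ι]

theorem IsHermitian.det_cfc {𝕜 : Type*} [RCLike 𝕜] {A : Matrix ι ι 𝕜} (hA : A.IsHermitian)
    (f : ℝ → ℝ) : (cfc f A).det = ∏ i, (f (hA.eigenvalues i) : 𝕜) := by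
  rw [hA.cfc_eq]
  simp [IsHermitian.cfc, -Unitary.conjStarAlgAut_apply]

theorem PosSemidef.one_add_det_rpow_le [Nonempty ι] {M : Matrix ι ι ℝ} (hM : M.PosSemidef) :
    1 + M.det ^ ((1 : ℝ) / Fintype.card ι) ≤ (1 + M).det ^ ((1 : ℝ) / Fintype.card ι) := by
  have hμ := hM.eigenvalues_nonneg
  have h1M : 1 + M = cfc (fun x : ℝ => 1 + x) M := by
    have hMsa : IsSelfAdjoint M := hM.1
    rw [cfc_add .., cfc_const_one .., cfc_id' ..]
  rw [h1M, hM.1.det_cfc, hM.1.det_eq_prod_eigenvalues]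
  simp only [RCLike.ofReal_real_eq_id, id]
  rw [← Real.finsetProd_rpow _ _ fun i _ => hμ i,
    ← Real.finsetProd_rpow _ _ fun i _ => (add_pos_of_pos_of_nonneg one_pos (hμ i)).le]
  refine Real.one_add_geom_mean_le_geom_mean_one_add_weighted _ _ _ (fun _ _ => by positivity)
    ?_ fun i _ => hμ i
  simp [Finset.card_univ, Fintype.card_ne_zero]

theorem det_conjTranspose_mul_mul_rpow {S X : Matrix ι ι ℝ} (hX : 0 ≤ X.det) (p : ℝ) :
    (Sᴴ * X * S).det ^ p = (S.det ^ 2) ^ p * X.det ^ p := by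
  rw [det_mul, det_mul, det_conjTranspose, star_trivial, mul_right_comm, ← sq,
    Real.mul_rpow (sq_nonneg _) hX]

open scoped MatrixOrder in
theorem PosDef.det_rpow_add_det_rpow_le [Nonempty ι] {A B : Matrix ι ι ℝ} (hA : A.PosDef)
    (hB : B.PosSemidef) :
    A.det ^ ((1 : ℝ) / Fintype.card ι) + B.det ^ ((1 : ℝ) / Fintype.card ι) ≤
      (A + B).det ^ ((1 : ℝ) / Fintype.card ι) := by
  set p : ℝ := 1 / Fintype.card ι
  obtain ⟨S, hS, rfl⟩ := CStarAlgebra.isStrictlyPositive_iff_eq_star_mul_self.mp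
    hA.isStrictlyPositive
  set M := S⁻¹ᴴ * B * S⁻¹
  have hM : M.PosSemidef := hB.conjTranspose_mul_mul_same _
  have hB' : B = Sᴴ * M * S := by
    have hS' : IsUnit S.det := (isUnit_iff_isUnit_det S).mp hS
    simp only [M, conjTranspose_nonsing_inv, Matrix.mul_assoc, nonsing_inv_mul _ hS',
      Matrix.mul_one]
    rw [← Matrix.mul_assoc, mul_nonsing_inv _ (by simpa using hS'), Matrix.one_mul]
  have hA' : star S * S = Sᴴ * 1 * S := by rw [Matrix.mul_one]; rfl
  have hAB : star S * S + B = Sᴴ * (1 + M) * S := by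
    rw [hA', hB', ← add_mul, ← Matrix.mul_add]
  calc (star S * S).det ^ p + B.det ^ p = (S.det ^ 2) ^ p * (1 + M.det ^ p) := by
        rw [hA', hB', det_conjTranspose_mul_mul_rpow (by simp),
          det_conjTranspose_mul_mul_rpow hM.det_nonneg, det_one, Real.one_rpow]
        ring
    _ ≤ (S.det ^ 2) ^ p * (1 + M).det ^ p := by
        gcongr
        exact hM.one_add_det_rpow_le
    _ = (star S * S + B).det ^ p := by
        rw [hAB, det_conjTranspose_mul_mul_rpow (PosSemidef.one.add hM).det_nonneg]

theorem PosSemidef.det_rpow_add_det_rpow_le [Nonempty ι] {A B : Matrix ι ι ℝ}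
    (hA : A.PosSemidef) (hB : B.PosSemidef) :
    A.det ^ ((1 : ℝ) / Fintype.card ι) + B.det ^ ((1 : ℝ) / Fintype.card ι) ≤
      (A + B).det ^ ((1 : ℝ) / Fintype.card ι) := by
  by_cases hdA : A.det = 0
  · by_cases hdB : B.det = 0
    · rw [hdA, hdB, Real.zero_rpow (by simp [Fintype.card_ne_zero]), zero_add]
      exact Real.rpow_nonneg (hA.add hB).det_nonneg _
    · rw [add_comm, add_comm A]
      exact PosDef.det_rpow_add_det_rpow_le (hB.posDef_iff_det_ne_zero.mpr hdB) hA
  · exact PosDef.det_rpow_add_det_rpow_le (hA.posDef_iff_det_ne_zero.mpr hdA) hB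

theorem det_smul_rpow_one_div_card [Nonempty ι] {A : Matrix ι ι ℝ} (hA : 0 ≤ A.det) {c : ℝ}
    (hc : 0 ≤ c) :
    (c • A).det ^ ((1 : ℝ) / Fintype.card ι) = c * A.det ^ ((1 : ℝ) / Fintype.card ι) := by
  rw [det_smul, Real.mul_rpow (by positivity) hA, one_div,
    Real.pow_rpow_inv_natCast hc Fintype.card_ne_zero]

end Matrix

/-- Minkowski determinant concavity: for symmetric positive semidefinite
`n×n` real matrices `A, B` and `t ∈ [0,1]`,
`det((1-t)A + tB)^{1/n} ≥ (1-t) det(A)^{1/n} + t det(B)^{1/n}`. -/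
theorem det_rpow_concave {n : ℕ} (hn : 0 < n) (A B : Matrix (Fin n) (Fin n) ℝ)
    (hA : A.PosSemidef) (hB : B.PosSemidef) (t : ℝ) (ht : t ∈ Set.Icc (0 : ℝ) 1) :
    (1 - t) * A.det ^ ((1 : ℝ) / n) + t * B.det ^ ((1 : ℝ) / n) ≤
      ((1 - t) • A + t • B).det ^ ((1 : ℝ) / n) := by
  obtain ⟨ht0, ht1⟩ := ht
  have : Nonempty (Fin n) := Fin.pos_iff_nonempty.mp hn
  have hs : 0 ≤ 1 - t := sub_nonneg.mpr ht1
  have key := (hA.smul hs).det_rpow_add_det_rpow_le (hB.smul ht0)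
  rwa [Matrix.det_smul_rpow_one_div_card hA.det_nonneg hs,
    Matrix.det_smul_rpow_one_div_card hB.det_nonneg ht0, Fintype.card_fin] at key
end

section
/- Let g : [0, π) → ℝ be defined by g(ρ) = log(sin ρ / ρ) (with g(0) = 0), and let v₀, v₁ be vectors in ℝ^n with |v₀| < π and |v₁| < π. Then the function t ↦ g(|(1-t)v₀ + t v₁|) is concave on [0,1]. Consequently, for φ_t = (1-t)φ₀ + tφ₁ with |∇φ_i(x)| < π, the map t ↦ log σ_t(x) = (n-1)·g(|∇φ_t(x)|) is concave. -/
open Real Set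

noncomputable section

/-- `g(ρ) = log(sin ρ / ρ)`, extended by `0` at `ρ = 0`. -/
noncomputable def gfun (ρ : ℝ) : ℝ :=
  open Classical in
  if ρ = 0 then 0 else Real.log (Real.sin ρ / ρ)

/-! The function `g = log ∘ sinc` is concave on `[0, π)`, since `g'' ρ = 1/ρ² - 1/sin² ρ ≤ 0`,
and it attains its maximum `0` at `ρ = 0`, so it is also antitone there. Along a segment whose
endpoints have norm `< π` the norm is convex with values in `[0, π)`, and a concave antitone
function of a convex function is concave. The factor `n - 1` is nonnegative except on `S⁰`,
whose tangent spaces are trivial, so that there both gradients vanish. -/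

theorem ConcaveOn.comp_convexOn_of_mapsTo {𝕜 E α β : Type*} [Semiring 𝕜] [PartialOrder 𝕜]
    [AddCommMonoid E] [SMul 𝕜 E] [AddCommMonoid α] [PartialOrder α] [SMul 𝕜 α]
    [AddCommMonoid β] [PartialOrder β] [SMul 𝕜 β] {s : Set E} {t : Set β} {f : E → β}
    {g : β → α} (hg : ConcaveOn 𝕜 t g) (hf : ConvexOn 𝕜 s f) (hg' : AntitoneOn g t)
    (hst : MapsTo f s t) : ConcaveOn 𝕜 s (g ∘ f) :=
  ⟨hf.1, fun _ hx _ hy _ _ ha hb hab =>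
    (hg.2 (hst hx) (hst hy) ha hb hab).trans <|
      hg' (hst <| hf.1 hx hy ha hb hab) (hg.1 (hst hx) (hst hy) ha hb hab) (hf.2 hx hy ha hb hab)⟩

theorem ConcaveOn.antitoneOn_of_isMaxOn {𝕜 β : Type*} [Field 𝕜] [LinearOrder 𝕜]
    [IsStrictOrderedRing 𝕜] [AddCommMonoid β] [LinearOrder β] [IsOrderedCancelAddMonoid β]
    [Module 𝕜 β] [PosSMulStrictMono 𝕜 β] {s : Set 𝕜} {f : 𝕜 → β} {a : 𝕜}
    (hf : ConcaveOn 𝕜 s f) (ha : a ∈ s) (hmax : IsMaxOn f s a) (hs : s ⊆ Ici a) :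
    AntitoneOn f s := by
  intro y hy z hz hyz
  rcases (hs hy).eq_or_lt with rfl | hay
  · exact hmax hz
  · exact hf.right_le_of_le_left'' ha hz hay hyz (hmax hy)

lemma sinc_pos_of_mem_Ico {ρ : ℝ} (hρ : ρ ∈ Ico 0 π) : 0 < sinc ρ := by
  rcases hρ.1.eq_or_lt with rfl | hρ₀
  · simp
  · rw [sinc_of_ne_zero hρ₀.ne']
    exact div_pos (sin_pos_of_pos_of_lt_pi hρ₀ hρ.2) hρ₀

lemma gfun_eq_log_sinc : gfun = fun ρ => log (sinc ρ) := by
  ext ρ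
  by_cases hρ : ρ = 0 <;> simp [gfun, hρ, sinc_of_ne_zero]

-- At `ρ = 0` both sides vanish, because `sin 0 / 0 = 0` and `log 0 = 0`.
lemma gfun_eq_log_sin_div : gfun = fun ρ => log (sin ρ / ρ) := by
  ext ρ
  by_cases hρ : ρ = 0 <;> simp [gfun, hρ]

lemma continuousOn_gfun : ContinuousOn gfun (Ico 0 π) := by
  rw [gfun_eq_log_sinc]
  exact continuous_sinc.continuousOn.log fun ρ hρ => (sinc_pos_of_mem_Ico hρ).ne'

lemma isMaxOn_gfun_zero : IsMaxOn gfun (Ico 0 π) 0 := fun ρ hρ => by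
  simpa [gfun_eq_log_sinc] using log_nonpos (sinc_pos_of_mem_Ico hρ).le (sinc_le_one ρ)

lemma hasDerivAt_gfun {ρ : ℝ} (hρ : ρ ∈ Ioo 0 π) :
    HasDerivAt gfun (cos ρ / sin ρ - ρ⁻¹) ρ := by
  have hsin : 0 < sin ρ := sin_pos_of_pos_of_lt_pi hρ.1 hρ.2
  have hρ₀ : ρ ≠ 0 := hρ.1.ne'
  have hquot := (hasDerivAt_sin ρ).fun_div (hasDerivAt_id' ρ) hρ₀
  rw [gfun_eq_log_sin_div]
  refine (hquot.log (div_pos hsin hρ.1).ne').congr_deriv ?_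
  field_simp

lemma hasDerivAt_cot_sub_inv {ρ : ℝ} (hρ : ρ ∈ Ioo 0 π) :
    HasDerivAt (fun r => cos r / sin r - r⁻¹) ((ρ ^ 2)⁻¹ - (sin ρ ^ 2)⁻¹) ρ := by
  have hsin : 0 < sin ρ := sin_pos_of_pos_of_lt_pi hρ.1 hρ.2
  have hρ₀ : ρ ≠ 0 := hρ.1.ne'
  refine (((hasDerivAt_cos ρ).fun_div (hasDerivAt_sin ρ) hsin.ne').fun_sub
    (hasDerivAt_inv hρ₀)).congr_deriv ?_
  field_simp
  linear_combination -ρ ^ 2 * sin_sq_add_cos_sq ρ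

lemma concaveOn_gfun : ConcaveOn ℝ (Ico 0 π) gfun := by
  refine concaveOn_of_hasDerivWithinAt2_nonpos (convex_Ico 0 π) continuousOn_gfun
    (f' := fun r => cos r / sin r - r⁻¹) (f'' := fun r => (r ^ 2)⁻¹ - (sin r ^ 2)⁻¹)
    (fun ρ hρ => ?_) (fun ρ hρ => ?_) (fun ρ hρ => ?_) <;> rw [interior_Ico] at hρ
  · exact (hasDerivAt_gfun hρ).hasDerivWithinAt
  · exact (hasDerivAt_cot_sub_inv hρ).hasDerivWithinAt
  · have hsin : 0 < sin ρ := sin_pos_of_pos_of_lt_pi hρ.1 hρ.2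
    exact sub_nonpos.2 (inv_anti₀ (by positivity) sin_sq_le_sq)

lemma antitoneOn_gfun : AntitoneOn gfun (Ico 0 π) :=
  concaveOn_gfun.antitoneOn_of_isMaxOn ⟨le_rfl, pi_pos⟩ isMaxOn_gfun_zero fun _ hρ => hρ.1

theorem concaveOn_gfun_norm_lineMap {E : Type*} [SeminormedAddCommGroup E] [NormedSpace ℝ E]
    {v₀ v₁ : E} (hv₀ : ‖v₀‖ < π) (hv₁ : ‖v₁‖ < π) :
    ConcaveOn ℝ (Icc 0 1) (fun t : ℝ => gfun ‖(1 - t) • v₀ + t • v₁‖) := by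
  have hconvex : ConvexOn ℝ (Icc 0 1) (fun t : ℝ => ‖AffineMap.lineMap v₀ v₁ t‖) :=
    ((convexOn_norm convex_univ).comp_affineMap (AffineMap.lineMap v₀ v₁)).subset
      (subset_univ _) (convex_Icc 0 1)
  have hmaps : MapsTo (fun t : ℝ => ‖AffineMap.lineMap v₀ v₁ t‖) (Icc 0 1) (Ico 0 π) :=
    fun t ht => ⟨norm_nonneg _, mem_ball_zero_iff.1 <| (convex_ball 0 π).lineMap_mem
      (mem_ball_zero_iff.2 hv₀) (mem_ball_zero_iff.2 hv₁) ht⟩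
  simpa only [Function.comp_def, AffineMap.lineMap_apply_module] using
    concaveOn_gfun.comp_convexOn_of_mapsTo hconvex antitoneOn_gfun hmaps

lemma inner_sphGrad_of_norm_eq_one {n : ℕ} (φ : Amb n → ℝ) {x : Amb n} (hx : ‖x‖ = 1) :
    inner ℝ x (sphGrad φ x) = 0 := by
  rw [sphGrad, inner_sub_right, inner_smul_right, real_inner_self_eq_norm_sq, hx]
  ring

lemma sphGrad_eq_zero_of_mem_Sph_zero (φ : Amb 0 → ℝ) {x : Amb 0} (hx : x ∈ Sph 0) :
    sphGrad φ x = 0 := by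
  have hnorm : ‖x‖ = 1 := mem_sphere_zero_iff_norm.1 hx
  have hx₀ : x 0 ≠ 0 := by
    intro h
    have : x = 0 := by ext i; rw [Fin.fin_one_eq_zero i, h]; rfl
    simp [this] at hnorm
  have horth := inner_sphGrad_of_norm_eq_one φ hnorm
  simp only [PiLp.inner_apply, Fin.sum_univ_succ, Fin.sum_univ_zero, add_zero,
    RCLike.inner_apply, conj_trivial] at horth
  ext i
  rw [Fin.fin_one_eq_zero i]
  exact (mul_eq_zero.1 horth).resolve_right hx₀

/-- for vectors `v₀, v₁` of norm `< π`, `t ↦ g(‖(1-t)v₀ + tv₁‖)` is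
concave on `[0,1]`; consequently for gradients `∇φᵢ(x) = vᵢ` of norm `< π`,
`t ↦ log σ_t(x) = (n-1)·g(‖∇φ_t(x)‖)` is concave. -/
theorem log_sigma_concave {n : ℕ} (v₀ v₁ : Amb n)
    (hv₀ : ‖v₀‖ < Real.pi) (hv₁ : ‖v₁‖ < Real.pi)
    (φ₀ φ₁ : Amb n → ℝ) (x : Amb n) (hx : x ∈ Sph n)
    (hg₀ : sphGrad φ₀ x = v₀) (hg₁ : sphGrad φ₁ x = v₁) :
    ConcaveOn ℝ (Set.Icc (0 : ℝ) 1) (fun t => gfun ‖(1 - t) • v₀ + t • v₁‖) ∧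
    ConcaveOn ℝ (Set.Icc (0 : ℝ) 1) (fun t =>
      ((n : ℝ) - 1) * gfun ‖(1 - t) • sphGrad φ₀ x + t • sphGrad φ₁ x‖) := by
  have hconcave := concaveOn_gfun_norm_lineMap hv₀ hv₁
  refine ⟨hconcave, ?_⟩
  cases n with
  | zero =>
    simp only [sphGrad_eq_zero_of_mem_Sph_zero _ hx, smul_zero, add_zero, norm_zero]
    exact concaveOn_const _ (convex_Icc 0 1)
  | succ m =>
    rw [hg₀, hg₁]
    simpa only [Pi.smul_apply, smul_eq_mul, Nat.cast_succ, add_sub_cancel_right] using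
      hconcave.smul (Nat.cast_nonneg (α := ℝ) m)
end
end

section
/- Let f ∈ C²([0,π]) with f'(0) = f'(π) = 0 and f'' > -1 almost everywhere, let ζ ∈ [0,π], and define h : (-π,π] → ℝ by h(ξ) = ξ²/2 + f(min{|ξ - ζ|, |ξ - ζ + 2π|}). Then h is strictly convex on (-π,π), satisfies h'(π-0) > h'(-π+0) at the endpoint (so ξ = π is not a minimizer), and hence h has a unique minimizer in (-π,π). -/
open Real Set MeasureTheory

/-!
On each of the arcs `[-π, ζ - π]`, `[ζ - π, ζ]`, `[ζ, π]` the circular distance to `ζ` is affine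
of slope `±1`, so there `h'(ξ) = ±G(±ξ + c) + const` with `G r = r + f' r`. Since `G' = 1 + f''`
is positive almost everywhere, `G` is strictly increasing, and `f'(0) = f'(π) = 0` makes the three
pieces of `h'` agree at `ζ` and `ζ - π`. So `h` is differentiable on `[-π, π]` with strictly
increasing derivative, hence strictly convex; as `h(-π) = h(π)`, its minimum over `[-π, π]` is
attained only in the interior, and only once.
-/

theorem strictMonoOn_of_hasDerivAt_of_ae_pos {G G' : ℝ → ℝ} {a b : ℝ}
    (hcont : ContinuousOn G (Icc a b)) (hderiv : ∀ x ∈ Ioo a b, HasDerivAt G (G' x) x)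
    (hint : IntegrableOn G' (Icc a b)) (hpos : ∀ᵐ x ∂volume.restrict (Icc a b), 0 < G' x) :
    StrictMonoOn G (Icc a b) := by
  intro x hx y hy hxy
  have hsub : Icc x y ⊆ Icc a b := Icc_subset_Icc hx.1 hy.2
  have hFTC : ∫ t in x..y, G' t = G y - G x :=
    intervalIntegral.integral_eq_sub_of_hasDeriv_right_of_le_real hxy.le (hcont.mono hsub)
      (fun t ht => (hderiv t (Ioo_subset_Ioo hx.1 hy.2 ht)).hasDerivWithinAt)
      (hint.mono_set hsub)
  have hpos' : ∀ᵐ t ∂volume.restrict (Ioc x y), 0 < G' t :=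
    ae_restrict_of_ae_restrict_of_subset (Ioc_subset_Icc_self.trans hsub) hpos
  have hintegral_pos : ∫ t in x..y, (0 : ℝ) < ∫ t in x..y, G' t := by
    refine intervalIntegral.integral_lt_integral_of_ae_le_of_measure_setOfPred_lt_ne_zero hxy.le
      intervalIntegrable_const
      ((intervalIntegrable_iff_integrableOn_Icc_of_le hxy.le).2 (hint.mono_set hsub))
      (hpos'.mono fun t ht => ht.le) ?_
    rw [measure_congr (ae_eq_univ.2 (ae_iff.1 hpos') :
        {t | 0 < G' t} =ᵐ[volume.restrict (Ioc x y)] univ), Measure.restrict_apply_univ,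
      Real.volume_Ioc]
    simpa using hxy
  rw [hFTC, intervalIntegral.integral_zero] at hintegral_pos
  linarith

theorem strictMonoOn_add_derivWithin_of_ae_neg_one_lt {f : ℝ → ℝ} {a b : ℝ} (hab : a < b)
    (hf : ContDiffOn ℝ 2 f (Icc a b))
    (hf'' : ∀ᵐ r ∂volume.restrict (Icc a b),
      -1 < derivWithin (derivWithin f (Icc a b)) (Icc a b) r) :
    StrictMonoOn (fun r => r + derivWithin f (Icc a b) r) (Icc a b) := by
  have hud : UniqueDiffOn ℝ (Icc a b) := uniqueDiffOn_Icc hab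
  have hf' : ContDiffOn ℝ 1 (derivWithin f (Icc a b)) (Icc a b) := hf.derivWithin hud le_rfl
  refine strictMonoOn_of_hasDerivAt_of_ae_pos
    (G' := fun r => 1 + derivWithin (derivWithin f (Icc a b)) (Icc a b) r)
    (continuousOn_id.add hf'.continuousOn) (fun x hx => ?_)
    (continuousOn_const.add (hf'.continuousOn_derivWithin hud le_rfl)).integrableOn_Icc
    (hf''.mono fun r hr => by linarith)
  exact (hasDerivAt_id x).add ((hf'.differentiableOn one_ne_zero x
    (Ioo_subset_Icc_self hx)).hasDerivWithinAt.hasDerivAt (Icc_mem_nhds hx.1 hx.2))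

theorem hasDerivWithinAt_sq_div_two_add_comp_affine {f : ℝ → ℝ} {f' σ c x : ℝ}
    {s t : Set ℝ} (hf : HasDerivWithinAt f f' t (σ * x + c))
    (hst : MapsTo (fun x => σ * x + c) s t) :
    HasDerivWithinAt (fun x => x ^ 2 / 2 + f (σ * x + c)) (x + σ * f') s x := by
  have hin : HasDerivWithinAt (fun x => σ * x + c) σ s x := by
    simpa using (((hasDerivAt_id x).const_mul σ).add_const c).hasDerivWithinAt
  have hsq : HasDerivWithinAt (fun x : ℝ => x ^ 2 / 2) x s x := by
    simpa using ((hasDerivAt_pow 2 x).div_const 2).hasDerivWithinAt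
  exact (hsq.add (hf.comp x hin hst)).congr_deriv (by ring)

theorem strictMonoOn_add_mul_comp_affine {g : ℝ → ℝ} {σ c : ℝ} {s t : Set ℝ}
    (hσ : σ = 1 ∨ σ = -1) (hg : StrictMonoOn (fun r => r + g r) t)
    (hst : MapsTo (fun x => σ * x + c) s t) :
    StrictMonoOn (fun x => x + σ * g (σ * x + c)) s := by
  intro x hx y hy hxy
  rcases hσ with rfl | rfl
  · have := hg (hst hx) (hst hy) (by linarith)
    simp only at this ⊢
    linarith
  · have := hg (hst hy) (hst hx) (by linarith)
    simp only at this ⊢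
    linarith

theorem hasDerivWithinAt_of_mem_of_isClosed {h : ℝ → ℝ} {y x : ℝ} {P : Set ℝ} (hP : IsClosed P)
    (hd : x ∈ P → HasDerivWithinAt h y P x) : HasDerivWithinAt h y P x := by
  by_cases hx : x ∈ P
  · exact hd hx
  · exact hasDerivWithinAt_iff_hasFDerivWithinAt.2 (.of_notMem_closure (by rwa [hP.closure_eq]))

structure HasStrictMonoDerivOn (h D : ℝ → ℝ) (s : Set ℝ) : Prop where
  hasDerivWithinAt : ∀ x ∈ s, HasDerivWithinAt h (D x) s x
  strictMonoOn : StrictMonoOn D s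

namespace HasStrictMonoDerivOn

variable {h D D₁ D₂ : ℝ → ℝ} {s : Set ℝ} {a b c : ℝ}

theorem of_eqOn_sq_div_two_add_comp_affine {f f' : ℝ → ℝ} {t : Set ℝ} {σ c : ℝ}
    (hσ : σ = 1 ∨ σ = -1) (hf : ∀ r ∈ t, HasDerivWithinAt f (f' r) t r)
    (hG : StrictMonoOn (fun r => r + f' r) t) (hst : MapsTo (fun x => σ * x + c) s t)
    (hh : EqOn h (fun x => x ^ 2 / 2 + f (σ * x + c)) s) :
    HasStrictMonoDerivOn h (fun x => x + σ * f' (σ * x + c)) s where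
  hasDerivWithinAt _ hx :=
    (hasDerivWithinAt_sq_div_two_add_comp_affine (hf _ (hst hx)) hst).congr hh (hh hx)
  strictMonoOn := strictMonoOn_add_mul_comp_affine hσ hG hst

theorem continuousOn (hD : HasStrictMonoDerivOn h D s) : ContinuousOn h s :=
  fun x hx => (hD.hasDerivWithinAt x hx).continuousWithinAt

theorem strictConvexOn (hD : HasStrictMonoDerivOn h D s) (hs : Convex ℝ s) :
    StrictConvexOn ℝ s h := by
  refine StrictMonoOn.strictConvexOn_of_deriv hs hD.continuousOn
    ((hD.strictMonoOn.mono interior_subset).congr fun x hx => ?_)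
  exact ((hD.hasDerivWithinAt x (interior_subset hx)).hasDerivAt
    (mem_interior_iff_mem_nhds.1 hx)).deriv.symm

theorem Icc_union (hab : a ≤ b) (hbc : b ≤ c) (h₁ : HasStrictMonoDerivOn h D₁ (Icc a b))
    (h₂ : HasStrictMonoDerivOn h D₂ (Icc b c)) (hb : D₁ b = D₂ b) :
    HasStrictMonoDerivOn h ((Iic b).piecewise D₁ D₂) (Icc a c) := by
  have e₁ : EqOn D₁ ((Iic b).piecewise D₁ D₂) (Icc a b) := fun x hx =>
    (piecewise_eq_of_mem _ _ _ (mem_Iic.2 hx.2)).symm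
  have e₂ : EqOn D₂ ((Iic b).piecewise D₁ D₂) (Icc b c) := fun x hx => by
    rcases hx.1.eq_or_lt with rfl | hbx
    · rw [piecewise_eq_of_mem _ _ _ (mem_Iic.2 le_rfl), hb]
    · exact (piecewise_eq_of_notMem _ _ _ (notMem_Iic.2 hbx)).symm
  rw [← Icc_union_Icc_eq_Icc hab hbc]
  exact ⟨fun x _ =>
      (hasDerivWithinAt_of_mem_of_isClosed isClosed_Icc fun hx =>
        e₁ hx ▸ h₁.hasDerivWithinAt x hx).union
      (hasDerivWithinAt_of_mem_of_isClosed isClosed_Icc fun hx =>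
        e₂ hx ▸ h₂.hasDerivWithinAt x hx),
    (h₁.strictMonoOn.congr e₁).union (h₂.strictMonoOn.congr e₂) (isGreatest_Icc hab)
      (isLeast_Icc hbc)⟩

theorem derivWithin_Ioi_lt_derivWithin_Iio (hD : HasStrictMonoDerivOn h D (Icc a b))
    (hab : a < b) : derivWithin h (Ioi a) a < derivWithin h (Iio b) b := by
  have ha : a ∈ Icc a b := left_mem_Icc.2 hab.le
  have hb : b ∈ Icc a b := right_mem_Icc.2 hab.le
  rw [((hD.hasDerivWithinAt a ha).mono_of_mem_nhdsWithin (Icc_mem_nhdsGT hab)).derivWithin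
      (uniqueDiffWithinAt_Ioi a),
    ((hD.hasDerivWithinAt b hb).mono_of_mem_nhdsWithin (Icc_mem_nhdsLT hab)).derivWithin
      (uniqueDiffWithinAt_Iio b)]
  exact hD.strictMonoOn ha hb hab

end HasStrictMonoDerivOn

theorem StrictConvexOn.existsUnique_isMinOn_Ioc {h : ℝ → ℝ} {a b : ℝ} (hab : a < b)
    (hconv : StrictConvexOn ℝ (Icc a b) h) (hcont : ContinuousOn h (Icc a b))
    (hend : h a = h b) : ∃! x, x ∈ Ioo a b ∧ IsMinOn h (Ioc a b) x := by
  have ha : a ∈ Icc a b := left_mem_Icc.2 hab.le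
  have hb : b ∈ Icc a b := right_mem_Icc.2 hab.le
  have hmid : h ((1 / 2 : ℝ) • a + (1 / 2 : ℝ) • b) < h b := by
    have := hconv.2 ha hb hab.ne (by norm_num : (0 : ℝ) < 1 / 2) (by norm_num : (0 : ℝ) < 1 / 2)
      (by norm_num)
    simp only [smul_eq_mul, hend] at this ⊢
    linarith
  have hmid_mem : (1 / 2 : ℝ) • a + (1 / 2 : ℝ) • b ∈ Icc a b :=
    hconv.1 ha hb (by norm_num) (by norm_num) (by norm_num)
  have isMinOn_Icc : ∀ x, IsMinOn h (Ioc a b) x → IsMinOn h (Icc a b) x := fun x hx y hy => by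
    rcases hy.1.eq_or_lt with hay | hay
    · show h x ≤ h y
      rw [← hay, hend]
      exact hx (right_mem_Ioc.2 hab)
    · exact hx ⟨hay, hy.2⟩
  obtain ⟨x, hx, hmin⟩ := isCompact_Icc.exists_isMinOn ⟨a, ha⟩ hcont
  have hx_lt : h x < h b := (hmin hmid_mem).trans_lt hmid
  have hxI : x ∈ Ioo a b :=
    ⟨hx.1.lt_of_ne (by rintro rfl; exact hx_lt.ne hend),
      hx.2.lt_of_ne (by rintro rfl; exact hx_lt.ne rfl)⟩
  refine ⟨x, ⟨hxI, hmin.on_subset Ioc_subset_Icc_self⟩, fun y ⟨hy, hymin⟩ => ?_⟩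
  exact hconv.eq_of_isMinOn (isMinOn_Icc y hymin) hmin (Ioo_subset_Icc_self hy) hx

/-- the one-dimensional reduction `h(ξ) = ξ²/2 + f(min{|ξ-ζ|, |ξ-ζ+2π|})`
(for `f ∈ C²([0,π])` with `f'(0) = f'(π) = 0`, `f'' > -1` a.e., and `ζ ∈ [0,π]`) is
strictly convex on `(-π,π)`, has `h'(π-0) > h'(-π+0)`, and has a unique minimizer of
`h` over `(-π,π]`, lying in `(-π,π)`. -/
theorem one_dim_reduction (f : ℝ → ℝ)
    (hf : ContDiffOn ℝ 2 f (Set.Icc 0 Real.pi))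
    (hf0 : derivWithin f (Set.Icc 0 Real.pi) 0 = 0)
    (hfπ : derivWithin f (Set.Icc 0 Real.pi) Real.pi = 0)
    (hf'' : ∀ᵐ r ∂(MeasureTheory.volume.restrict (Set.Icc 0 Real.pi)),
      -1 < derivWithin (derivWithin f (Set.Icc 0 Real.pi)) (Set.Icc 0 Real.pi) r)
    (ζ : ℝ) (hζ : ζ ∈ Set.Icc 0 Real.pi) :
    let h : ℝ → ℝ := fun ξ => ξ ^ 2 / 2 + f (min |ξ - ζ| |ξ - ζ + 2 * Real.pi|)
    StrictConvexOn ℝ (Set.Ioo (-Real.pi) Real.pi) h ∧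
    derivWithin h (Set.Ioi (-Real.pi)) (-Real.pi) < derivWithin h (Set.Iio Real.pi) Real.pi ∧
    (∃! ξ₀, ξ₀ ∈ Set.Ioo (-Real.pi) Real.pi ∧
      ∀ ξ ∈ Set.Ioc (-Real.pi) Real.pi, h ξ₀ ≤ h ξ) := by
  intro h
  obtain ⟨hζ0, hζπ⟩ := hζ
  have hπ := pi_pos
  have hG := strictMonoOn_add_derivWithin_of_ae_neg_one_lt hπ hf hf''
  set f' := derivWithin f (Icc 0 π)
  have hf' : ∀ r ∈ Icc 0 π, HasDerivWithinAt f (f' r) (Icc 0 π) r := fun r hr =>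
    (hf.differentiableOn two_ne_zero r hr).hasDerivWithinAt
  have piece : ∀ {σ c u v : ℝ}, (σ = 1 ∨ σ = -1) →
      (∀ x ∈ Icc u v, σ * x + c ∈ Icc 0 π ∧ min |x - ζ| |x - ζ + 2 * π| = σ * x + c) →
      HasStrictMonoDerivOn h (fun x => x + σ * f' (σ * x + c)) (Icc u v) := fun hσ hd =>
    .of_eqOn_sq_div_two_add_comp_affine hσ hf' hG (fun x hx => (hd x hx).1)
      fun x hx => by simp only [h, (hd x hx).2]
  have hC := piece (σ := 1) (c := 2 * π - ζ) (u := -π) (v := ζ - π) (Or.inl rfl)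
    fun x ⟨hx₁, hx₂⟩ => by
      rw [abs_of_nonpos (by linarith), abs_of_nonneg (by linarith), min_eq_right (by linarith)]
      exact ⟨⟨by linarith, by linarith⟩, by ring⟩
  have hA := piece (σ := -1) (c := ζ) (u := ζ - π) (v := ζ) (Or.inr rfl)
    fun x ⟨hx₁, hx₂⟩ => by
      rw [abs_of_nonpos (by linarith), abs_of_nonneg (by linarith), min_eq_left (by linarith)]
      exact ⟨⟨by linarith, by linarith⟩, by ring⟩
  have hB := piece (σ := 1) (c := -ζ) (u := ζ) (v := π) (Or.inl rfl)
    fun x ⟨hx₁, hx₂⟩ => by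
      rw [abs_of_nonneg (by linarith), abs_of_nonneg (by linarith), min_eq_left (by linarith)]
      exact ⟨⟨by linarith, by linarith⟩, by ring⟩
  have hAB := hA.Icc_union (by linarith) hζπ hB (by simp [hf0])
  have hD := hC.Icc_union (by linarith) (by linarith) hAB (by
    rw [piecewise_eq_of_mem _ _ _ (mem_Iic.2 (by linarith))]
    have e₁ : 1 * (ζ - π) + (2 * π - ζ) = π := by ring
    have e₂ : -1 * (ζ - π) + ζ = π := by ring
    simp only [e₁, e₂, hfπ, mul_zero])
  have hconv := hD.strictConvexOn (convex_Icc _ _)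
  have hend : h (-π) = h π := by
    simp only [h]
    rw [abs_of_nonpos (by linarith), abs_of_nonneg (by linarith), abs_of_nonneg (by linarith),
      abs_of_nonneg (by linarith), min_eq_right (by linarith), min_eq_left (by linarith)]
    ring_nf
  exact ⟨hconv.subset Ioo_subset_Icc_self (convex_Ioo _ _),
    hD.derivWithin_Ioi_lt_derivWithin_Iio (by linarith),
    hconv.existsUnique_isMinOn_Ioc (by linarith) hD.continuousOn hend⟩
end
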